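/- Let G be a finite abelian group of type (n_1, …, n_r) and order n = n_1⋯n_r, let m ≤ n be a positive integer, and let h ≥ 2. Then u±(G, m, h) = min{f_d(m, h) : d ∈ D(G, m)}, where u±(G, m, h) = min{Π_{i=1}^r u(n_i, m_i, h) : 1 ≤ m_i ≤ n_i for each i and Π_{i=1}^r m_i ≥ m}, and D(G, m) = {d dividing n : d = d_1⋯d_r with each d_i dividing n_i and d·n_r ≥ d_r·m}. -/

import Mathlib

open Finset Pointwise

/-- The `h`-fold sumset of a finite subset `A` of an abelian group:
`hA = {Σ λ_a • a : λ : A → ℕ, Σ λ_a = h}`. -/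
def foldSumset {G : Type*} [AddCommGroup G] (h : ℕ) (A : Finset G) : Set G :=
  {g | ∃ c : G → ℕ, (∑ a ∈ A, c a) = h ∧ (∑ a ∈ A, c a • a) = g}

/-- The `h`-fold signed sumset of a finite subset `A` of an abelian group:
`h±A = {Σ λ_a • a : λ : A → ℤ, Σ |λ_a| = h}`. -/
def foldSignedSumset {G : Type*} [AddCommGroup G] (h : ℕ) (A : Finset G) : Set G :=
  {g | ∃ c : G → ℤ, (∑ a ∈ A, (c a).natAbs) = h ∧ (∑ a ∈ A, c a • a) = g}

/-- `ρ(G, m, h) = min {|hA| : A ⊆ G, |A| = m}`. -/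
noncomputable def rho (G : Type*) [AddCommGroup G] (m h : ℕ) : ℕ :=
  sInf {k | ∃ A : Finset G, A.card = m ∧ (foldSumset h A).ncard = k}

/-- `ρ±(G, m, h) = min {|h±A| : A ⊆ G, |A| = m}`. -/
noncomputable def rhoPM (G : Type*) [AddCommGroup G] (m h : ℕ) : ℕ :=
  sInf {k | ∃ A : Finset G, A.card = m ∧ (foldSignedSumset h A).ncard = k}

/-- `f_d(m, h) = (h⌈m/d⌉ - h + 1) d`. -/
def fdmh (d m h : ℕ) : ℕ := (h * ((m + d - 1) / d) - h + 1) * d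

/-- `u(n, m, h) = min {f_d(m, h) : d a positive divisor of n}`. -/
noncomputable def uFun (n m h : ℕ) : ℕ :=
  sInf {k | ∃ d : ℕ, 0 < d ∧ d ∣ n ∧ k = fdmh d m h}

/-!
For `d = d₁⋯d_r ∈ D(G, m)` the choice `m_i = d_i` (`i < r`), `m_r = d_r⌈m/d⌉` gives
`∏ u(n_i, m_i, h) ≤ f_d(m, h)`, because `u(n, dK, h) ≤ f_d(dK, h) = (h(K - 1) + 1)d`.

Conversely, the coordinates are merged into the last one, one at a time: for `ν ∣ n`,
`1 ≤ m₁ ≤ ν` and `1 ≤ m₂ ≤ n` there is `d ∣ ν` with `m₁m₂ ≤ dn` and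
`d·u(n, ⌈m₁m₂/d⌉, h) ≤ u(ν, m₁, h)·u(n, m₂, h)`. Let `e₁ ∣ ν`, `e₂ ∣ n` attain these two minima
and `γ = gcd(e₁e₂, ν)`. If `m₁m₂ ≤ γn`, take `d = γ`: then `e₁e₂/γ ∣ n`, and `f` is
submultiplicative, `f_{e₁e₂}(m₁m₂, h) ≤ f_{e₁}(m₁, h)·f_{e₂}(m₂, h)`. Otherwise take `d = ν` and
use the divisor `e₁n/ν` of `n`; the failure of `m₁m₂ ≤ γn` forces `⌈m₁/e₁⌉, ⌈m₂/e₂⌉ ≥ 2`,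
and then `h ≥ 2` makes the estimate work. At the end, `f_{ce}(m, h) = c·f_e(⌈m/c⌉, h)` turns the
merged bound into `f_d(m, h)` for some `d ∈ D(G, m)`.
-/

namespace Nat

lemma le_mul_ceilDiv {d : ℕ} (hd : 0 < d) (m : ℕ) : m ≤ d * (m ⌈/⌉ d) :=
  le_smul_ceilDiv hd

lemma ceilDiv_pos {m d : ℕ} (hd : 0 < d) (hm : 0 < m) : 0 < m ⌈/⌉ d :=
  Nat.pos_of_ne_zero fun h0 => by
    have := (ceilDiv_le_iff_le_mul hd).1 h0.le
    omega

lemma mul_ceilDiv_sub_one_lt {d m : ℕ} (hd : 0 < d) (hm : 0 < m) : d * (m ⌈/⌉ d - 1) < m := by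
  by_contra! hle
  have := (ceilDiv_le_iff_le_mul hd).2 hle
  have := ceilDiv_pos hd hm
  omega

lemma ceilDiv_ceilDiv {c d : ℕ} (hc : 0 < c) (hd : 0 < d) (m : ℕ) :
    m ⌈/⌉ c ⌈/⌉ d = m ⌈/⌉ (c * d) :=
  eq_of_forall_ge_iff fun x => by
    simp only [ceilDiv_le_iff_le_mul hd, ceilDiv_le_iff_le_mul hc,
      ceilDiv_le_iff_le_mul (Nat.mul_pos hc hd), mul_assoc]

lemma mul_ceilDiv_cancel_left {d : ℕ} (hd : 0 < d) (K : ℕ) : d * K ⌈/⌉ d = K :=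
  smul_ceilDiv hd K

end Nat

lemma mul_mul_sub_one_add_one_le (h a b : ℕ) :
    h * (a * b - 1) + 1 ≤ (h * (a - 1) + 1) * (h * (b - 1) + 1) := by
  rcases Nat.eq_zero_or_pos a with rfl | ha
  · simp
  rcases Nat.eq_zero_or_pos b with rfl | hb
  · simp
  obtain ⟨α, rfl⟩ := Nat.exists_eq_add_of_le' ha
  obtain ⟨β, rfl⟩ := Nat.exists_eq_add_of_le' hb
  have : (α + 1) * (β + 1) - 1 = α * β + α + β := by ring_nf; omega
  simp only [this, Nat.add_sub_cancel]
  nlinarith [Nat.zero_le (h * α * β), Nat.zero_le h, Nat.mul_le_mul_right (α * β) (Nat.le_mul_self h)]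

lemma mul_sub_one_add_one_mul_le_of_lt {h a b K t : ℕ} (hh : 2 ≤ h) (ha : 2 ≤ a) (hb : 2 ≤ b)
    (hK : (K - 1) * t < a * b) (ht : t < a * b) :
    (h * (K - 1) + 1) * t ≤ (h * (a - 1) + 1) * (h * (b - 1) + 1) := by
  obtain ⟨α, rfl⟩ := Nat.exists_eq_add_of_le' ha
  obtain ⟨β, rfl⟩ := Nat.exists_eq_add_of_le' hb
  obtain ⟨η, rfl⟩ := Nat.exists_eq_add_of_le' hh
  rw [show α + 2 - 1 = α + 1 by omega, show β + 2 - 1 = β + 1 by omega]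
  generalize K - 1 = κ at hK ⊢
  have hκ := Nat.mul_le_mul_left (η + 2) (Nat.succ_le_of_lt hK)
  nlinarith [Nat.zero_le (η * η * α * β), Nat.zero_le (η * α * β), Nat.zero_le (η * α),
    Nat.zero_le (η * β), Nat.zero_le (α * β)]

lemma fdmh_eq (d m h : ℕ) : fdmh d m h = (h * (m ⌈/⌉ d - 1) + 1) * d := by
  rw [fdmh, Nat.mul_sub_one, Nat.ceilDiv_eq_add_pred_div]

lemma fdmh_mono {d : ℕ} (hd : 0 < d) (h : ℕ) : Monotone (fdmh d · h) := fun m m' hm => by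
  simp only [fdmh_eq]
  gcongr
  exact (gc_mul_ceilDiv hd).monotone_l hm

lemma fdmh_mul {c d : ℕ} (hc : 0 < c) (hd : 0 < d) (m h : ℕ) :
    fdmh (c * d) m h = c * fdmh d (m ⌈/⌉ c) h := by
  rw [fdmh_eq, fdmh_eq, Nat.ceilDiv_ceilDiv hc hd]
  ring

lemma fdmh_mul_self {d : ℕ} (hd : 0 < d) (K h : ℕ) :
    fdmh d (d * K) h = (h * (K - 1) + 1) * d := by
  rw [fdmh_eq, Nat.mul_ceilDiv_cancel_left hd]

lemma fdmh_mul_mul_le {e₁ e₂ : ℕ} (he₁ : 0 < e₁) (he₂ : 0 < e₂) (m₁ m₂ h : ℕ) :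
    fdmh (e₁ * e₂) (m₁ * m₂) h ≤ fdmh e₁ m₁ h * fdmh e₂ m₂ h := by
  have hceil : m₁ * m₂ ⌈/⌉ (e₁ * e₂) ≤ m₁ ⌈/⌉ e₁ * (m₂ ⌈/⌉ e₂) := by
    rw [ceilDiv_le_iff_le_mul (Nat.mul_pos he₁ he₂), mul_mul_mul_comm]
    exact Nat.mul_le_mul (Nat.le_mul_ceilDiv he₁ m₁) (Nat.le_mul_ceilDiv he₂ m₂)
  calc fdmh (e₁ * e₂) (m₁ * m₂) h
      ≤ (h * (m₁ ⌈/⌉ e₁ * (m₂ ⌈/⌉ e₂) - 1) + 1) * (e₁ * e₂) := by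
        rw [fdmh_eq]; gcongr
    _ ≤ (h * (m₁ ⌈/⌉ e₁ - 1) + 1) * (h * (m₂ ⌈/⌉ e₂ - 1) + 1) * (e₁ * e₂) := by
        gcongr; exact mul_mul_sub_one_add_one_le _ _ _
    _ = fdmh e₁ m₁ h * fdmh e₂ m₂ h := by rw [fdmh_eq, fdmh_eq]; ring

lemma uFun_le {n d : ℕ} (hd : 0 < d) (hdn : d ∣ n) (m h : ℕ) : uFun n m h ≤ fdmh d m h :=
  Nat.sInf_le ⟨d, hd, hdn, rfl⟩

lemma exists_uFun_eq {n : ℕ} (hn : 0 < n) (m h : ℕ) :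
    ∃ d, 0 < d ∧ d ∣ n ∧ uFun n m h = fdmh d m h :=
  Nat.sInf_mem (s := {k | ∃ d, 0 < d ∧ d ∣ n ∧ k = fdmh d m h}) ⟨_, n, hn, dvd_rfl, rfl⟩

lemma uFun_mono {n : ℕ} (hn : 0 < n) (h : ℕ) : Monotone (uFun n · h) := fun m m' hm => by
  obtain ⟨d, hd, hdn, hu⟩ := exists_uFun_eq hn m' h
  simp only [hu]
  exact (uFun_le hd hdn m h).trans (fdmh_mono hd h hm)

lemma uFun_mul_le {n d : ℕ} (hd : 0 < d) (hdn : d ∣ n) (K h : ℕ) :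
    uFun n (d * K) h ≤ (h * (K - 1) + 1) * d :=
  (uFun_le hd hdn _ h).trans_eq (fdmh_mul_self hd K h)

lemma mul_uFun_ceilDiv_le {n c e : ℕ} (hc : 0 < c) (he : 0 < e) (hen : e ∣ n) (m h : ℕ) :
    c * uFun n (m ⌈/⌉ c) h ≤ fdmh (c * e) m h := by
  rw [fdmh_mul hc he]
  exact Nat.mul_le_mul_left c (uFun_le he hen _ h)

lemma mul_uFun_ceilDiv_le_of_gcd_lt {e₁ w e₂ t m₁ m₂ h : ℕ} (hh : 2 ≤ h) (he₁ : 0 < e₁)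
    (he₂ : 0 < e₂) (hw : w ∣ e₂ * t) (hm₁ : m₁ ≤ e₁ * w) (hm₂ : m₂ ≤ e₂ * t)
    (hlt : e₁ * Nat.gcd w e₂ * (e₂ * t) < m₁ * m₂) :
    e₁ * w * uFun (e₂ * t) (m₁ * m₂ ⌈/⌉ (e₁ * w)) h ≤ fdmh e₁ m₁ h * fdmh e₂ m₂ h := by
  set g := Nat.gcd w e₂
  set a := m₁ ⌈/⌉ e₁
  set b := m₂ ⌈/⌉ e₂
  set K := m₁ * m₂ ⌈/⌉ (e₁ * (e₂ * t))
  have hM : m₁ * m₂ ≤ a * b * (e₁ * e₂) :=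
    calc m₁ * m₂ ≤ e₁ * a * (e₂ * b) :=
          Nat.mul_le_mul (Nat.le_mul_ceilDiv he₁ m₁) (Nat.le_mul_ceilDiv he₂ m₂)
      _ = a * b * (e₁ * e₂) := by ring
  have hMpos : 0 < m₁ * m₂ := by omega
  have hg : 0 < g := Nat.gcd_pos_of_pos_right w he₂
  have hwpos : 0 < w := Nat.pos_of_mul_pos_left ((Nat.pos_of_mul_pos_right hMpos).trans_le hm₁)
  have ht : 0 < t := Nat.pos_of_mul_pos_left ((Nat.pos_of_mul_pos_left hMpos).trans_le hm₂)
  have hgt : g * t < a * b := by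
    refine Nat.lt_of_mul_lt_mul_right (a := e₁ * e₂) ?_
    calc g * t * (e₁ * e₂) = e₁ * g * (e₂ * t) := by ring
      _ < m₁ * m₂ := hlt
      _ ≤ a * b * (e₁ * e₂) := hM
  have hKt : (K - 1) * t < a * b := by
    refine Nat.lt_of_mul_lt_mul_right (a := e₁ * e₂) ?_
    calc (K - 1) * t * (e₁ * e₂) = e₁ * (e₂ * t) * (K - 1) := by ring
      _ < m₁ * m₂ := Nat.mul_ceilDiv_sub_one_lt (by positivity) hMpos
      _ ≤ a * b * (e₁ * e₂) := hM
  have hga : g < a := by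
    have : e₁ * g < m₁ := Nat.lt_of_mul_lt_mul_right (hlt.trans_le (Nat.mul_le_mul_left m₁ hm₂))
    exact Nat.lt_of_mul_lt_mul_left (this.trans_le (Nat.le_mul_ceilDiv he₁ m₁))
  -- `b = 1` is impossible: `w ∣ g t` and `g t < a ≤ w`.
  have hb : 2 ≤ b := by
    by_contra! hb
    have hwg : w ≤ g * t := Nat.le_of_dvd (by positivity) (dvd_gcd_mul_iff_dvd_mul.2 hw)
    have haw : a ≤ w := (ceilDiv_le_iff_le_mul he₁).2 hm₁
    have : a * b ≤ a := by interval_cases b <;> simp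
    omega
  obtain ⟨s, hs⟩ := hw
  have hs₀ : 0 < s := Nat.pos_of_mul_pos_left (hs ▸ Nat.mul_pos he₂ ht)
  calc e₁ * w * uFun (e₂ * t) (m₁ * m₂ ⌈/⌉ (e₁ * w)) h
      ≤ fdmh (e₁ * w * s) (m₁ * m₂) h :=
        mul_uFun_ceilDiv_le (by positivity) hs₀ (Dvd.intro_left w hs.symm) _ h
    _ = (h * (K - 1) + 1) * t * (e₁ * e₂) := by rw [mul_assoc, ← hs, fdmh_eq]; ring
    _ ≤ (h * (a - 1) + 1) * (h * (b - 1) + 1) * (e₁ * e₂) :=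
        Nat.mul_le_mul_right _ <| mul_sub_one_add_one_mul_le_of_lt hh (by omega) hb hKt
          ((Nat.le_mul_of_pos_left t hg).trans_lt hgt)
    _ = fdmh e₁ m₁ h * fdmh e₂ m₂ h := by rw [fdmh_eq, fdmh_eq]; ring

lemma exists_dvd_mul_uFun_ceilDiv_le {ν n m₁ m₂ : ℕ} (h : ℕ) (hh : 2 ≤ h) (hνn : ν ∣ n)
    (hm₁ : 0 < m₁) (hm₁ν : m₁ ≤ ν) (hm₂ : 0 < m₂) (hm₂n : m₂ ≤ n) :
    ∃ d, 0 < d ∧ d ∣ ν ∧ m₁ * m₂ ≤ d * n ∧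
      d * uFun n (m₁ * m₂ ⌈/⌉ d) h ≤ uFun ν m₁ h * uFun n m₂ h := by
  obtain ⟨e₁, he₁, ⟨w, rfl⟩, hu₁⟩ := exists_uFun_eq (hm₁.trans_le hm₁ν) m₁ h
  obtain ⟨e₂, he₂, ⟨t, rfl⟩, hu₂⟩ := exists_uFun_eq (hm₂.trans_le hm₂n) m₂ h
  rw [hu₁, hu₂]
  have hw : 0 < w := Nat.pos_of_mul_pos_left (hm₁.trans_le hm₁ν)
  -- `e₁ * gcd w e₂ = gcd (e₁ * e₂) (e₁ * w)`
  by_cases hlt : e₁ * Nat.gcd w e₂ * (e₂ * t) < m₁ * m₂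
  · exact ⟨e₁ * w, by positivity, dvd_rfl, Nat.mul_le_mul hm₁ν hm₂n,
      mul_uFun_ceilDiv_le_of_gcd_lt hh he₁ he₂ ((Dvd.intro_left e₁ rfl).trans hνn) hm₁ν hm₂n hlt⟩
  · obtain ⟨s, hs⟩ := Nat.gcd_dvd_right w e₂
    have hs₀ : 0 < s := Nat.pos_of_mul_pos_left (hs ▸ he₂)
    refine ⟨e₁ * Nat.gcd w e₂, by positivity, Nat.mul_dvd_mul_left e₁ (Nat.gcd_dvd_left w e₂),
      not_lt.1 hlt, ?_⟩
    calc e₁ * Nat.gcd w e₂ * uFun (e₂ * t) (m₁ * m₂ ⌈/⌉ (e₁ * Nat.gcd w e₂)) h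
        ≤ fdmh (e₁ * Nat.gcd w e₂ * s) (m₁ * m₂) h :=
          mul_uFun_ceilDiv_le (by positivity) hs₀ ((Dvd.intro_left _ hs.symm).mul_right t) _ h
      _ = fdmh (e₁ * e₂) (m₁ * m₂) h := by rw [mul_assoc, ← hs]
      _ ≤ fdmh e₁ m₁ h * fdmh e₂ m₂ h := fdmh_mul_mul_le he₁ he₂ m₁ m₂ h

lemma exists_dvd_prod_mul_uFun_ceilDiv_le {N mN h : ℕ} (hh : 2 ≤ h) (hmN : 0 < mN)
    (hmNN : mN ≤ N) {k : ℕ} (ν ms : Fin k → ℕ) (hν : ∀ i, ν i ∣ N)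
    (hms : ∀ i, 1 ≤ ms i ∧ ms i ≤ ν i) {m : ℕ} (hm : m ≤ (∏ i, ms i) * mN) :
    ∃ ds : Fin k → ℕ, (∀ i, 0 < ds i ∧ ds i ∣ ν i) ∧ m ≤ (∏ i, ds i) * N ∧
      (∏ i, ds i) * uFun N (m ⌈/⌉ ∏ i, ds i) h ≤ (∏ i, uFun (ν i) (ms i) h) * uFun N mN h := by
  induction k generalizing mN m with
  | zero =>
    simp only [Finset.univ_eq_empty, Finset.prod_empty, one_mul, ceilDiv_one] at hm ⊢
    exact ⟨Fin.elim0, fun i => i.elim0, hm.trans hmNN, uFun_mono (hmN.trans_le hmNN) h hm⟩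
  | succ k ih =>
    obtain ⟨d, hd, hdν, hdN, hdu⟩ :=
      exists_dvd_mul_uFun_ceilDiv_le h hh (hν 0) (hms 0).1 (hms 0).2 hmN hmNN
    have hmd : m ⌈/⌉ d ≤ (∏ i : Fin k, ms i.succ) * (ms 0 * mN ⌈/⌉ d) := by
      rw [ceilDiv_le_iff_le_mul hd]
      calc m ≤ (∏ i : Fin k, ms i.succ) * (ms 0 * mN) := by
            rwa [Fin.prod_univ_succ, mul_comm (ms 0), mul_assoc] at hm
        _ ≤ (∏ i : Fin k, ms i.succ) * (d * (ms 0 * mN ⌈/⌉ d)) :=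
            Nat.mul_le_mul_left _ (Nat.le_mul_ceilDiv hd _)
        _ = d * ((∏ i : Fin k, ms i.succ) * (ms 0 * mN ⌈/⌉ d)) := by ring
    obtain ⟨ds, hds, hdsN, hdsu⟩ := ih (Nat.ceilDiv_pos hd (Nat.mul_pos (hms 0).1 hmN))
      ((ceilDiv_le_iff_le_mul hd).2 hdN) (fun i => ν i.succ) (fun i => ms i.succ)
      (fun i => hν i.succ) (fun i => hms i.succ) hmd
    have hc : 0 < ∏ i, ds i := Finset.prod_pos fun i _ => (hds i).1
    refine ⟨Fin.cons d ds, Fin.cases ⟨hd, hdν⟩ hds, ?_, ?_⟩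
    · rw [Fin.prod_univ_succ, Fin.cons_zero]
      simp only [Fin.cons_succ]
      calc m ≤ d * (m ⌈/⌉ d) := Nat.le_mul_ceilDiv hd m
        _ ≤ d * ((∏ i, ds i) * N) := Nat.mul_le_mul_left d hdsN
        _ = d * (∏ i, ds i) * N := by ring
    · rw [Fin.prod_univ_succ, Fin.cons_zero, Fin.prod_univ_succ]
      simp only [Fin.cons_succ]
      rw [← Nat.ceilDiv_ceilDiv hd hc]
      set P := ∏ i : Fin k, uFun (ν i.succ) (ms i.succ) h
      calc d * (∏ i, ds i) * uFun N (m ⌈/⌉ d ⌈/⌉ ∏ i, ds i) h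
          ≤ d * (P * uFun N (ms 0 * mN ⌈/⌉ d) h) := by
            rw [mul_assoc]; exact Nat.mul_le_mul_left d hdsu
        _ = P * (d * uFun N (ms 0 * mN ⌈/⌉ d) h) := by ring
        _ ≤ P * (uFun (ν 0) (ms 0) h * uFun N mN h) := Nat.mul_le_mul_left P hdu
        _ = uFun (ν 0) (ms 0) h * P * uFun N mN h := by ring

lemma dvd_last_of_dvd_succ {α : Type*} [Monoid α] {k : ℕ} {n : Fin (k + 1) → α}
    (hchain : ∀ i : Fin (k + 1), ∀ hi : i.val + 1 < k + 1, n i ∣ n ⟨i.val + 1, hi⟩)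
    (i : Fin (k + 1)) : n i ∣ n (Fin.last k) :=
  Fin.reverseInduction dvd_rfl (fun j ih => (hchain j.castSucc (by simp)).trans ih) i

lemma exists_prod_uFun_le_fdmh {ι : Type*} [Fintype ι] [DecidableEq ι] {n di : ι → ℕ}
    (hn : ∀ i, 0 < n i) (hdi : ∀ i, di i ∣ n i) {m : ℕ} (hm : 0 < m) (h : ℕ) (j : ι)
    (hj : di j * m ≤ (∏ i, di i) * n j) :
    ∃ ms : ι → ℕ, (∀ i, 1 ≤ ms i ∧ ms i ≤ n i) ∧ m ≤ ∏ i, ms i ∧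
      ∏ i, uFun (n i) (ms i) h ≤ fdmh (∏ i, di i) m h := by
  set d := ∏ i, di i
  have hdi₀ : ∀ i, 0 < di i := fun i => Nat.pos_of_dvd_of_pos (hdi i) (hn i)
  have hd : 0 < d := Finset.prod_pos fun i _ => hdi₀ i
  set K := m ⌈/⌉ d
  set x : ι → ℕ := Pi.mulSingle j K
  have hx : ∀ i, 0 < x i := fun i => by
    rcases eq_or_ne i j with rfl | hi
    · simpa [x] using Nat.ceilDiv_pos hd hm
    · simp [x, hi]
  have hxn : ∀ i, di i * x i ≤ n i := fun i => by
    rcases eq_or_ne i j with rfl | hi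
    · obtain ⟨q, hq⟩ := hdi i
      have hmq : m ≤ d * q := Nat.le_of_mul_le_mul_left (hj.trans_eq (by rw [hq]; ring)) (hdi₀ i)
      simpa [x, hq] using Nat.mul_le_mul_left (di i) ((ceilDiv_le_iff_le_mul hd).2 hmq)
    · simpa [x, hi] using Nat.le_of_dvd (hn i) (hdi i)
  refine ⟨fun i => di i * x i, fun i => ⟨Nat.mul_pos (hdi₀ i) (hx i), hxn i⟩, ?_, ?_⟩
  · simpa [Finset.prod_mul_distrib, x] using Nat.le_mul_ceilDiv hd m
  · calc ∏ i, uFun (n i) (di i * x i) h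
        ≤ ∏ i, (h * (x i - 1) + 1) * di i :=
          Finset.prod_le_prod' fun i _ => uFun_mul_le (hdi₀ i) (hdi i) (x i) h
      _ = (h * (K - 1) + 1) * d := by
          rw [Finset.prod_mul_distrib, Fintype.prod_eq_single j fun i hi => by simp [x, hi]]
          simp [x, d]
      _ = fdmh d m h := (fdmh_eq d m h).symm

lemma exists_fdmh_le_prod_uFun {k m h : ℕ} (hh : 2 ≤ h) {n ms : Fin (k + 1) → ℕ}
    (hn : ∀ i, n i ∣ n (Fin.last k)) (hms : ∀ i, 1 ≤ ms i ∧ ms i ≤ n i) (hm : m ≤ ∏ i, ms i) :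
    ∃ d, d ∣ ∏ i, n i ∧
      (∃ di : Fin (k + 1) → ℕ, (∀ i, di i ∣ n i) ∧ d = ∏ i, di i ∧
        di (Fin.last k) * m ≤ d * n (Fin.last k)) ∧
      fdmh d m h ≤ ∏ i, uFun (n i) (ms i) h := by
  rw [Fin.prod_univ_castSucc] at hm
  obtain ⟨ds, hds, hmN, hu⟩ := exists_dvd_prod_mul_uFun_ceilDiv_le hh (hms (Fin.last k)).1
    (hms (Fin.last k)).2 (fun i => n i.castSucc) (fun i => ms i.castSucc)
    (fun i => hn i.castSucc) (fun i => hms i.castSucc) hm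
  set c := ∏ i, ds i
  have hc : 0 < c := Finset.prod_pos fun i _ => (hds i).1
  obtain ⟨e, he, heN, hue⟩ :=
    exists_uFun_eq ((hms (Fin.last k)).1.trans (hms (Fin.last k)).2) (m ⌈/⌉ c) h
  have hdi : ∀ i, (Fin.snoc ds e : Fin (k + 1) → ℕ) i ∣ n i :=
    Fin.lastCases (by simpa using heN) fun i => by simpa using (hds i).2
  have hprod : ∏ i, (Fin.snoc ds e : Fin (k + 1) → ℕ) i = c * e := by
    simp [Fin.prod_univ_castSucc, c]
  refine ⟨c * e, hprod ▸ Finset.prod_dvd_prod_of_dvd _ _ fun i _ => hdi i,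
    ⟨Fin.snoc ds e, hdi, hprod.symm, ?_⟩, ?_⟩
  · simpa [mul_comm, mul_left_comm, mul_assoc] using Nat.mul_le_mul_left e hmN
  · calc fdmh (c * e) m h = c * uFun (n (Fin.last k)) (m ⌈/⌉ c) h := by
          rw [fdmh_mul hc he, hue]
      _ ≤ ∏ i, uFun (n i) (ms i) h := by rw [Fin.prod_univ_castSucc]; exact hu

lemma Nat.sInf_le_sInf_of_forall_exists_le {S T : Set ℕ} (hT : T.Nonempty)
    (hST : ∀ t ∈ T, ∃ s ∈ S, s ≤ t) : sInf S ≤ sInf T := by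
  obtain ⟨s, hs, hst⟩ := hST _ (Nat.sInf_mem hT)
  exact (Nat.sInf_le hs).trans hst

/-- `u±(G, m, h) = min {f_d(m, h) : d ∈ D(G, m)}` for a group of
type `(n_1, …, n_r)`. -/
theorem uPM_eq_min_fdmh_DGm (r : ℕ) (hr : 0 < r) (n : Fin r → ℕ)
    (hchain : ∀ i : Fin r, ∀ hi : i.val + 1 < r, n i ∣ n ⟨i.val + 1, hi⟩)
    (m h : ℕ) (hm : 0 < m) (hmn : m ≤ ∏ i, n i) (hh : 2 ≤ h) :
    sInf {k | ∃ ms : Fin r → ℕ, (∀ i, 1 ≤ ms i ∧ ms i ≤ n i) ∧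
        m ≤ ∏ i, ms i ∧ k = ∏ i, uFun (n i) (ms i) h} =
    sInf {k | ∃ d : ℕ, d ∣ ∏ i, n i ∧
        (∃ di : Fin r → ℕ, (∀ i, di i ∣ n i) ∧ d = ∏ i, di i ∧
          di ⟨r - 1, by omega⟩ * m ≤ d * n ⟨r - 1, by omega⟩) ∧
        k = fdmh d m h} := by
  obtain ⟨k, rfl⟩ : ∃ k, r = k + 1 := ⟨r - 1, by omega⟩
  have hn : ∀ i, 0 < n i := fun i =>
    Nat.pos_of_ne_zero fun h0 => by rw [Finset.prod_eq_zero (Finset.mem_univ i) h0] at hmn; omega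
  apply le_antisymm
  · refine Nat.sInf_le_sInf_of_forall_exists_le ⟨_, _, dvd_rfl,
      ⟨n, fun i => dvd_rfl, rfl, (Nat.mul_comm _ _).trans_le (Nat.mul_le_mul_right _ hmn)⟩, rfl⟩ ?_
    rintro _ ⟨-, -, ⟨di, hdi, rfl, hlast⟩, rfl⟩
    obtain ⟨ms, hms, hmms, hu⟩ := exists_prod_uFun_le_fdmh hn hdi hm h (Fin.last k) hlast
    exact ⟨_, ⟨ms, hms, hmms, rfl⟩, hu⟩
  · refine Nat.sInf_le_sInf_of_forall_exists_le ⟨_, n, fun i => ⟨hn i, le_rfl⟩, hmn, rfl⟩ ?_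
    rintro _ ⟨ms, hms, hmms, rfl⟩
    obtain ⟨d, hd, hdi, hu⟩ := exists_fdmh_le_prod_uFun hh (dvd_last_of_dvd_succ hchain) hms hmms
    exact ⟨_, ⟨d, hd, hdi, rfl⟩, hu⟩
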